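/- arXiv:2401.17540 — 5 statements merged into one kernel-verified Lean document; each statement's English description precedes it below -/
import Mathlib

section
/- With the SVD block notation (Γ = VᵀHU with blocks X = D^{-1}, Y, Z, W), assuming H satisfies AHA = A: H satisfies (AH)ᵀ = AH if and only if Y = 0; H satisfies (HA)ᵀ = HA if and only if Z = 0; and H satisfies HAH = H if and only if W = ZDY. -/
open Matrix

/-!
Conjugating by the orthogonal factors turns `A`, `H`, `AH`, `HA` and `HAH` into block matrices:
with `S = [D 0; 0 0]` and `Γ = [D⁻¹ Y; Z W]` we get `SΓ = [1 DY; 0 0]`, `ΓS = [1 0; ZD 0]` and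
`ΓSΓ = [D⁻¹ Y; Z ZDY]`. Orthogonal conjugation is injective and commutes with transposition, so
each property of `H` is read off blockwise, and `D` is invertible, so `DY = 0` and `ZD = 0` reduce
to `Y = 0` and `Z = 0`.
-/

namespace Matrix

theorem mul_mul_mul_mul_mul_of_mul_eq_one {k l m n o p R : Type*} [Fintype m] [Fintype n]
    [Fintype o] [Fintype p] [DecidableEq m] [Semiring R] {B : Matrix m n R} {C : Matrix n m R}
    (h : B * C = 1) (U : Matrix l o R) (S : Matrix o m R) (Γ : Matrix m p R) (W : Matrix p k R) :
    U * S * B * (C * Γ * W) = U * (S * Γ) * W := by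
  simp only [Matrix.mul_assoc]
  rw [← Matrix.mul_assoc B C, h, Matrix.one_mul]

theorem leftInverse_conj {m n o p R : Type*} [Fintype m] [Fintype n] [Fintype o] [Fintype p]
    [DecidableEq n] [DecidableEq o] [Semiring R] {A : Matrix m n R} {A' : Matrix n m R}
    {B : Matrix o p R} {B' : Matrix p o R} (hA : A' * A = 1) (hB : B * B' = 1) :
    Function.LeftInverse (fun N : Matrix m p R => A' * N * B') (fun M => A * M * B) := by
  intro M
  simp only [Matrix.mul_assoc]
  rw [hB, Matrix.mul_one, ← Matrix.mul_assoc, hA, Matrix.one_mul]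

theorem isSymm_mul_mul_transpose_iff {m n R : Type*} [Fintype m] [Fintype n] [DecidableEq n]
    [CommSemiring R] {U : Matrix m n R} (hU : Uᵀ * U = 1) {M : Matrix n n R} :
    (U * M * Uᵀ).IsSymm ↔ M.IsSymm := by
  have hconj : (U * M * Uᵀ)ᵀ = U * Mᵀ * Uᵀ := by
    rw [transpose_mul, transpose_mul, transpose_transpose, Matrix.mul_assoc]
  rw [IsSymm, IsSymm, hconj]
  exact (leftInverse_conj hU hU).injective.eq_iff

theorem isSymm_fromBlocks_one_upper_iff {r p R : Type*} [DecidableEq r] [Zero R] [One R]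
    {B : Matrix r p R} : (fromBlocks 1 B 0 0 : Matrix (r ⊕ p) (r ⊕ p) R).IsSymm ↔ B = 0 := by
  simp [isSymm_fromBlocks_iff, eq_comm]

theorem isSymm_fromBlocks_one_lower_iff {r q R : Type*} [DecidableEq r] [Zero R] [One R]
    {C : Matrix q r R} : (fromBlocks 1 0 C 0 : Matrix (r ⊕ q) (r ⊕ q) R).IsSymm ↔ C = 0 := by
  simp [isSymm_fromBlocks_iff, eq_comm]

section Invertible

variable {r p q R : Type*} [Fintype r] [DecidableEq r] [CommRing R] {D : Matrix r r R}

theorem mul_eq_zero_iff_of_isUnit_det_left (hD : IsUnit D.det) {Y : Matrix r p R} :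
    D * Y = 0 ↔ Y = 0 := by
  simpa only [Matrix.mul_zero] using
    (mul_right_injective_of_inv D⁻¹ D (nonsing_inv_mul D hD)).eq_iff (a := Y) (b := 0)

theorem mul_eq_zero_iff_of_isUnit_det_right (hD : IsUnit D.det) {Z : Matrix q r R} :
    Z * D = 0 ↔ Z = 0 := by
  simpa only [Matrix.zero_mul] using
    (mul_left_injective_of_inv D D⁻¹ (mul_nonsing_inv D hD)).eq_iff (a := Z) (b := 0)

theorem fromBlocks_mul_fromBlocks_inv [Fintype q] (hD : IsUnit D.det) (Y : Matrix r p R)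
    (Z : Matrix q r R) (W : Matrix q p R) :
    (fromBlocks D 0 0 0 : Matrix (r ⊕ p) (r ⊕ q) R) * fromBlocks D⁻¹ Y Z W =
      fromBlocks 1 (D * Y) 0 0 := by
  simp [fromBlocks_multiply, mul_nonsing_inv D hD]

theorem fromBlocks_inv_mul_fromBlocks [Fintype p] (hD : IsUnit D.det) (Y : Matrix r p R)
    (Z : Matrix q r R) (W : Matrix q p R) :
    fromBlocks D⁻¹ Y Z W * (fromBlocks D 0 0 0 : Matrix (r ⊕ p) (r ⊕ q) R) =
      fromBlocks 1 0 (Z * D) 0 := by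
  simp [fromBlocks_multiply, nonsing_inv_mul D hD]

theorem fromBlocks_inv_mul_fromBlocks_mul_fromBlocks_inv [Fintype p] [Fintype q]
    (hD : IsUnit D.det) (Y : Matrix r p R) (Z : Matrix q r R) (W : Matrix q p R) :
    fromBlocks D⁻¹ Y Z W * (fromBlocks D 0 0 0 : Matrix (r ⊕ p) (r ⊕ q) R) *
        fromBlocks D⁻¹ Y Z W = fromBlocks D⁻¹ Y Z (Z * D * Y) := by
  rw [fromBlocks_inv_mul_fromBlocks hD, fromBlocks_multiply]
  simp [Matrix.mul_assoc, mul_nonsing_inv D hD]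

end Invertible

end Matrix

theorem P234_block_characterization_general (r p q : ℕ)
    (U : Matrix (Fin r ⊕ Fin p) (Fin r ⊕ Fin p) ℝ)
    (V : Matrix (Fin r ⊕ Fin q) (Fin r ⊕ Fin q) ℝ)
    (hU : Uᵀ * U = 1) (hV : Vᵀ * V = 1)
    (d : Fin r → ℝ) (hd : ∀ i, 0 < d i)
    (A : Matrix (Fin r ⊕ Fin p) (Fin r ⊕ Fin q) ℝ)
    (hA : A = U * (Matrix.fromBlocks (Matrix.diagonal d) 0 0 0 :
        Matrix (Fin r ⊕ Fin p) (Fin r ⊕ Fin q) ℝ) * Vᵀ)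
    (H : Matrix (Fin r ⊕ Fin q) (Fin r ⊕ Fin p) ℝ)
    (Y : Matrix (Fin r) (Fin p) ℝ)
    (Z : Matrix (Fin q) (Fin r) ℝ) (W : Matrix (Fin q) (Fin p) ℝ)
    (hΓ : Vᵀ * H * U = Matrix.fromBlocks (Matrix.diagonal d)⁻¹ Y Z W) :
    ((A * H)ᵀ = A * H ↔ Y = 0) ∧
    ((H * A)ᵀ = H * A ↔ Z = 0) ∧
    (H * A * H = H ↔ W = Z * Matrix.diagonal d * Y) := by
  have hD : IsUnit (diagonal d).det := by
    rw [det_diagonal]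
    exact isUnit_iff_ne_zero.mpr (Finset.prod_ne_zero_iff.mpr fun i _ => (hd i).ne')
  have hH : H = V * fromBlocks (diagonal d)⁻¹ Y Z W * Uᵀ := by
    rw [← hΓ]
    exact (leftInverse_conj (mul_eq_one_comm.mp hV) (mul_eq_one_comm.mp hU) H).symm
  have hAH : A * H = U * fromBlocks 1 (diagonal d * Y) 0 0 * Uᵀ := by
    rw [hA, hH, mul_mul_mul_mul_mul_of_mul_eq_one hV, fromBlocks_mul_fromBlocks_inv hD]
  have hHA : H * A = V * fromBlocks 1 0 (Z * diagonal d) 0 * Vᵀ := by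
    rw [hA, hH, mul_mul_mul_mul_mul_of_mul_eq_one hU, fromBlocks_inv_mul_fromBlocks hD]
  have hHAH : H * A * H = V * fromBlocks (diagonal d)⁻¹ Y Z (Z * diagonal d * Y) * Uᵀ := by
    rw [hA, hH, mul_mul_mul_mul_mul_of_mul_eq_one hU, mul_mul_mul_mul_mul_of_mul_eq_one hV,
      fromBlocks_inv_mul_fromBlocks_mul_fromBlocks_inv hD]
  refine ⟨?_, ?_, ?_⟩
  · rw [hAH]
    exact (isSymm_mul_mul_transpose_iff hU).trans <|
      isSymm_fromBlocks_one_upper_iff.trans (mul_eq_zero_iff_of_isUnit_det_left hD)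
  · rw [hHA]
    exact (isSymm_mul_mul_transpose_iff hV).trans <|
      isSymm_fromBlocks_one_lower_iff.trans (mul_eq_zero_iff_of_isUnit_det_right hD)
  · rw [hHAH, hH, (leftInverse_conj hV hU).injective.eq_iff, fromBlocks_inj]
    simp [eq_comm]

/-- SVD block characterization of properties (P2), (P3), (P4), assuming (P1) holds
(so that the top-left block of `Γ = Vᵀ * H * U` is `D⁻¹`). -/
theorem P234_block_characterization (r p q : ℕ)
    (U : Matrix (Fin r ⊕ Fin p) (Fin r ⊕ Fin p) ℝ)
    (V : Matrix (Fin r ⊕ Fin q) (Fin r ⊕ Fin q) ℝ)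
    (hU : Uᵀ * U = 1) (hV : Vᵀ * V = 1)
    (d : Fin r → ℝ) (hd : ∀ i, 0 < d i)
    (A : Matrix (Fin r ⊕ Fin p) (Fin r ⊕ Fin q) ℝ)
    (hA : A = U * (Matrix.fromBlocks (Matrix.diagonal d) 0 0 0 :
        Matrix (Fin r ⊕ Fin p) (Fin r ⊕ Fin q) ℝ) * Vᵀ)
    (H : Matrix (Fin r ⊕ Fin q) (Fin r ⊕ Fin p) ℝ)
    (Y : Matrix (Fin r) (Fin p) ℝ)
    (Z : Matrix (Fin q) (Fin r) ℝ) (W : Matrix (Fin q) (Fin p) ℝ)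
    (hΓ : Vᵀ * H * U = Matrix.fromBlocks (Matrix.diagonal d)⁻¹ Y Z W)
    (h1 : A * H * A = A) :
    ((A * H)ᵀ = A * H ↔ Y = 0) ∧
    ((H * A)ᵀ = H * A ↔ Z = 0) ∧
    (H * A * H = H ↔ W = Z * Matrix.diagonal d * Y) :=
  P234_block_characterization_general r p q U V hU hV d hd A hA H Y Z W hΓ
end

section
/- Let A ∈ ℝ^{m×n} have rank r, let T be a set of r column indices such that Â := A[·,T] has rank r, and let Ĥ := (Âᵀ Â)^{−1} Âᵀ. Then the n×m matrix H whose rows indexed by T equal Ĥ and whose other rows are zero satisfies AHA = A, HAH = H, and (AH)ᵀ = AH. -/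
/-!
Selecting the columns `T` is right multiplication by `E := I[·,T]`, so `H = E Ĥ` and
`A H = Â Ĥ`, which is symmetric. Since `rank Â = rank A`, the column spaces of `Â` and `A`
agree, so `A = Â C` for some `C`; together with `Ĥ Â = I` this gives `A H A = Â Ĥ Â C = A`
and `H A H = E Ĥ Â Ĥ = H`.
-/

open Matrix

namespace Matrix

variable {l m n R K : Type*}

def IsReflexiveGInverse [Fintype m] [Fintype n] [NonUnitalNonAssocSemiring R]
    (A : Matrix m n R) (H : Matrix n m R) : Prop :=
  A * H * A = A ∧ H * A * H = H

theorem isUnit_of_rank_eq_card [Field K] [Fintype n] [DecidableEq n] {M : Matrix n n K}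
    (h : M.rank = Fintype.card n) : IsUnit M := by
  have hsurj : Function.Surjective M.mulVecLin := by
    rw [← LinearMap.range_eq_top]
    apply Submodule.eq_top_of_finrank_eq
    rw [← rank, h, Module.finrank_fintype_fun_eq_card]
  rw [← mulVec_injective_iff_isUnit]
  exact LinearMap.injective_iff_surjective.mpr hsurj

theorem exists_mul_eq_of_range_mulVecLin_le [CommSemiring R] [Fintype n] [Fintype l]
    {A : Matrix m n R} {B : Matrix m l R}
    (h : LinearMap.range A.mulVecLin ≤ LinearMap.range B.mulVecLin) : ∃ C, B * C = A := by
  have hcol (j : n) : A.col j ∈ LinearMap.range B.mulVecLin := by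
    classical
    exact h ⟨Pi.single j 1, mulVec_single_one A j⟩
  choose C hC using hcol
  exact ⟨(of C)ᵀ, by ext i j; exact congrFun (hC j) i⟩

theorem range_mulVecLin_submatrix_id_eq [Field K] [Fintype n] [Fintype l] (A : Matrix m n K)
    (c : l → n)
    (h : (A.submatrix id c).rank = A.rank) :
    LinearMap.range (A.submatrix id c).mulVecLin = LinearMap.range A.mulVecLin := by
  classical
  refine Submodule.eq_of_le_of_finrank_eq ?_ h
  have hAc : A * (1 : Matrix n n K).submatrix id c = A.submatrix id c :=
    mul_submatrix_one (Equiv.refl n) c A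
  rw [← hAc, mulVecLin_mul]
  exact LinearMap.range_comp_le_range _ _

theorem eq_one_submatrix_mul_of_rows [NonAssocSemiring R] [Fintype l] [DecidableEq n] {c : l → n}
    (hc : Function.Injective c)
    {H : Matrix n m R} {G : Matrix l m R} (hrows : ∀ k, H (c k) = G k)
    (hzero : ∀ j, (∀ k, c k ≠ j) → H j = 0) :
    H = (1 : Matrix n n R).submatrix id c * G := by
  classical
  ext j i
  by_cases hj : ∃ k, c k = j
  · obtain ⟨k, rfl⟩ := hj
    simp [mul_apply, one_apply, hc.eq_iff, hrows]
  · push Not at hj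
    simp [mul_apply, hzero j hj, (hj _).symm]

theorem isReflexiveGInverse_mul_of_mul_eq [Fintype l] [DecidableEq l] [Fintype m] [Fintype n]
    [Semiring R]
    {A : Matrix m n R} {B : Matrix m l R} {E : Matrix n l R} {G : Matrix l m R}
    {C : Matrix l n R} (hAE : A * E = B) (hBC : B * C = A) (hGB : G * B = 1) :
    IsReflexiveGInverse A (E * G) := by
  constructor
  · calc A * (E * G) * A = B * G * (B * C) := by rw [← Matrix.mul_assoc, hAE, hBC]
      _ = B * (G * B) * C := by simp only [Matrix.mul_assoc]
      _ = A := by rw [hGB, Matrix.mul_one, hBC]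
  · calc E * G * A * (E * G) = E * (G * B) * G := by
          rw [← hAE]; simp only [Matrix.mul_assoc]
      _ = E * G := by rw [hGB, Matrix.mul_one]

theorem isSymm_mul_inv_transpose_mul_self_mul_transpose [CommRing R] [Fintype m] [Fintype n]
    [DecidableEq n] (B : Matrix m n R) : (B * ((Bᵀ * B)⁻¹ * Bᵀ)).IsSymm := by
  rw [IsSymm, transpose_mul, transpose_mul, transpose_nonsing_inv, transpose_mul,
    transpose_transpose, Matrix.mul_assoc]

end Matrix

/-- Column-block construction: if `Â := A[·,T]` has rank `r = rank A` and `H` has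
rows `T` equal to `Ĥ := (ÂᵀÂ)⁻¹Âᵀ` and all other rows zero, then `H` is an
ah-symmetric reflexive generalized inverse of `A`. -/
theorem column_block_ah_symmetric (m n r : ℕ) (A : Matrix (Fin m) (Fin n) ℝ)
    (hrA : A.rank = r)
    (T : Fin r → Fin n) (hT : Function.Injective T)
    (hr : (A.submatrix id T).rank = r)
    (H : Matrix (Fin n) (Fin m) ℝ)
    (hHrows : ∀ k, H (T k) =
      (((A.submatrix id T)ᵀ * A.submatrix id T)⁻¹ * (A.submatrix id T)ᵀ) k)
    (hHzero : ∀ j, (∀ k, T k ≠ j) → H j = 0) :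
    A * H * A = A ∧ H * A * H = H ∧ (A * H)ᵀ = A * H := by
  set B := A.submatrix id T
  set G := (Bᵀ * B)⁻¹ * Bᵀ
  have hAE : A * (1 : Matrix (Fin n) (Fin n) ℝ).submatrix id T = B :=
    mul_submatrix_one (Equiv.refl _) T A
  have hGB : G * B = 1 := by
    have hunit : IsUnit (Bᵀ * B) :=
      isUnit_of_rank_eq_card (by rw [rank_transpose_mul_self, hr, Fintype.card_fin])
    rw [Matrix.mul_assoc, nonsing_inv_mul _ ((isUnit_iff_isUnit_det _).mp hunit)]
  obtain ⟨C, hBC⟩ := exists_mul_eq_of_range_mulVecLin_le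
    (range_mulVecLin_submatrix_id_eq A T (hr.trans hrA.symm)).ge
  obtain ⟨hAHA, hHAH⟩ := isReflexiveGInverse_mul_of_mul_eq hAE hBC hGB
  rw [eq_one_submatrix_mul_of_rows hT hHrows hHzero]
  refine ⟨hAHA, hHAH, ?_⟩
  rw [← Matrix.mul_assoc, hAE]
  exact isSymm_mul_inv_transpose_mul_self_mul_transpose B
end

section
/- Let Â ∈ ℝ^{m×r} with rank r. Then there exists an r×r matrix E such that for every i ∈ {1,…,r}: ‖E_{i·}Âᵀ‖₂ = 1 and E_{ii} = ‖Â†_{i·}‖₂, where Â† = (ÂᵀÂ)^{−1}Âᵀ is the Moore–Penrose pseudoinverse of Â. -/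
open Matrix

/-!
Since `Â` has full column rank, the Gram matrix `G = ÂᵀÂ` is positive definite, hence so is
`G⁻¹`. The rows of `Â† = G⁻¹Âᵀ` have Gram matrix `Â†Â†ᵀ = G⁻¹ÂᵀÂG⁻¹ = G⁻¹`, so
`‖Â†_{i·}‖₂² = (G⁻¹)ᵢᵢ > 0`. Taking `E = diag((G⁻¹)ᵢᵢ^{-1/2}) G⁻¹` normalises the rows of
`EÂᵀ = diag(…) Â†`, and its diagonal entries are `(G⁻¹)ᵢᵢ / √(G⁻¹)ᵢᵢ = √(G⁻¹)ᵢᵢ`.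
-/

namespace Matrix

variable {m n : Type*} [Fintype n]

theorem mulVec_injective_of_rank_eq_card {K : Type*} [Field K] {A : Matrix m n K}
    (hA : A.rank = Fintype.card n) : Function.Injective A.mulVec := by
  have hker : Module.finrank K (LinearMap.ker A.mulVecLin) = 0 := by
    have := A.mulVecLin.finrank_range_add_finrank_ker
    rw [Module.finrank_fintype_fun_eq_card] at this
    change A.rank + _ = _ at this
    omega
  rw [← coe_mulVecLin, ← LinearMap.ker_eq_bot]
  exact Submodule.finrank_eq_zero.mp hker

theorem mul_transpose_self_apply_self {α : Type*} [Semiring α] (B : Matrix m n α) (i : m) :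
    (B * Bᵀ) i i = ∑ j, B i j ^ 2 := by
  simp only [mul_apply, transpose_apply, sq]

theorem pinv_mul_transpose_pinv [Fintype m] [DecidableEq n] {R : Type*} [CommRing R]
    {A : Matrix m n R} (hA : IsUnit (Aᵀ * A).det) :
    (Aᵀ * A)⁻¹ * Aᵀ * ((Aᵀ * A)⁻¹ * Aᵀ)ᵀ = (Aᵀ * A)⁻¹ := by
  have hsymm : (Aᵀ * A)ᵀ = Aᵀ * A := by rw [transpose_mul, transpose_transpose]
  rw [transpose_mul, transpose_transpose, transpose_nonsing_inv, hsymm, Matrix.mul_assoc,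
    ← Matrix.mul_assoc Aᵀ, nonsing_inv_mul_cancel_left _ _ hA]

end Matrix

/-- For `Â ∈ ℝ^{m×r}` of rank `r`, there is an `r×r` matrix `E` with
`‖E_{i·}Âᵀ‖₂ = 1` and `E_{ii} = ‖Â†_{i·}‖₂` for each `i`,
where `Â† = (ÂᵀÂ)⁻¹Âᵀ`. -/
theorem exists_E_matrix (m r : ℕ) (Ahat : Matrix (Fin m) (Fin r) ℝ)
    (hr : Ahat.rank = r) :
    ∃ E : Matrix (Fin r) (Fin r) ℝ, ∀ i,
      Real.sqrt (∑ j, ((E * Ahatᵀ) i j) ^ 2) = 1 ∧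
      E i i = Real.sqrt (∑ j, (((Ahatᵀ * Ahat)⁻¹ * Ahatᵀ) i j) ^ 2) := by
  set G := Ahatᵀ * Ahat
  have hG : G.PosDef :=
    PosDef.conjTranspose_mul_self Ahat (mulVec_injective_of_rank_eq_card (by simpa using hr))
  have hrow (i : Fin r) : ∑ j, ((G⁻¹ * Ahatᵀ) i j) ^ 2 = G⁻¹ i i := by
    rw [← mul_transpose_self_apply_self,
      pinv_mul_transpose_pinv ((isUnit_iff_isUnit_det G).mp hG.isUnit)]
  refine ⟨diagonal (fun i => (√(G⁻¹ i i))⁻¹) * G⁻¹, fun i => ⟨?_, ?_⟩⟩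
  · have hpos : 0 < G⁻¹ i i := hG.inv.diag_pos
    simp_rw [Matrix.mul_assoc, diagonal_mul, mul_pow, ← Finset.mul_sum, hrow, inv_pow,
      Real.sq_sqrt hpos.le, inv_mul_cancel₀ hpos.ne', Real.sqrt_one]
  · rw [diagonal_mul, hrow, inv_mul_eq_div, Real.div_sqrt]
end

section
/- Let Y ∈ ℝ^{n×r}, ρ > 0, and γ ∈ ℕ with γ ≤ n. Let τ be a permutation of {1,…,n} such that ‖Y_{τ₁·}‖₂ ≥ ‖Y_{τ₂·}‖₂ ≥ … ≥ ‖Y_{τₙ·}‖₂. Then the matrix E with rows E_{τᵢ·} = ((‖Y_{τᵢ·}‖₂ − 1/ρ)/‖Y_{τᵢ·}‖₂)·Y_{τᵢ·} when 1/ρ < ‖Y_{τᵢ·}‖₂ and i ≤ γ, and E_{τᵢ·} = 0 otherwise, minimizes ‖E‖_{2,1} + (ρ/2)‖E − Y‖_F² over all E ∈ ℝ^{n×r} with at most γ nonzero rows. -/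
/-!
Row by row, the objective is `‖e‖ + (ρ/2)‖e − y‖²`. Its value at `e = 0` is `(ρ/2)‖y‖²`, and its
unconstrained minimum (the Huber envelope of the norm, attained by shrinking `y` towards `0` by
`1/ρ`) is smaller by the gain `(ρ/2)·max(‖y‖ − 1/ρ, 0)²`. Any `F` with at most `γ` nonzero rows
therefore costs at least `Σ (ρ/2)‖Yᵢ‖²` minus the gains of its nonzero rows. The gain is monotone in
`‖y‖`, so the total gain over at most `γ` rows is maximal on the `γ` rows of largest norm, which is
exactly what `E` collects.
-/

open Matrix Finset

section RowCost

variable {ι : Type*} [Fintype ι]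

noncomputable def rowCost (ρ : ℝ) (y e : ι → ℝ) : ℝ :=
  √(∑ j, e j ^ 2) + ρ / 2 * ∑ j, (e j - y j) ^ 2

noncomputable def shrinkGain (ρ s : ℝ) : ℝ :=
  ρ / 2 * max (s - 1 / ρ) 0 ^ 2

lemma shrinkGain_nonneg {ρ : ℝ} (hρ : 0 ≤ ρ) (s : ℝ) : 0 ≤ shrinkGain ρ s := by
  unfold shrinkGain; positivity

lemma shrinkGain_mono {ρ : ℝ} (hρ : 0 ≤ ρ) : Monotone (shrinkGain ρ) := by
  intro s s' h
  unfold shrinkGain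
  gcongr

lemma shrinkGain_eq_zero {ρ s : ℝ} (h : s ≤ 1 / ρ) : shrinkGain ρ s = 0 := by
  rw [shrinkGain, max_eq_right (sub_nonpos.mpr h)]
  ring

lemma sq_sqrt_sum_sq_sub_sqrt_sum_sq_le (e y : ι → ℝ) :
    (√(∑ j, e j ^ 2) - √(∑ j, y j ^ 2)) ^ 2 ≤ ∑ j, (e j - y j) ^ 2 := by
  have hnorm : ∀ v : ι → ℝ, ‖WithLp.toLp 2 v‖ = √(∑ j, v j ^ 2) := fun v => by
    simp [EuclideanSpace.norm_eq]
  have := abs_norm_sub_norm_le (WithLp.toLp 2 e) (WithLp.toLp 2 y)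
  rw [← WithLp.toLp_sub, hnorm, hnorm, hnorm] at this
  calc (√(∑ j, e j ^ 2) - √(∑ j, y j ^ 2)) ^ 2 ≤ √(∑ j, (e - y) j ^ 2) ^ 2 := by
        rw [← sq_abs]; gcongr
    _ = ∑ j, (e j - y j) ^ 2 := Real.sq_sqrt (by positivity)

lemma rowCost_zero (ρ : ℝ) (y : ι → ℝ) : rowCost ρ y 0 = ρ / 2 * √(∑ j, y j ^ 2) ^ 2 := by
  simp [rowCost, Real.sq_sqrt (by positivity : 0 ≤ ∑ j, y j ^ 2)]

lemma sub_shrinkGain_le_rowCost {ρ : ℝ} (hρ : 0 < ρ) (y e : ι → ℝ) :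
    ρ / 2 * √(∑ j, y j ^ 2) ^ 2 - shrinkGain ρ √(∑ j, y j ^ 2) ≤ rowCost ρ y e := by
  have hdist := sq_sqrt_sum_sq_sub_sqrt_sum_sq_le e y
  unfold rowCost shrinkGain
  set s := √(∑ j, y j ^ 2)
  set t := √(∑ j, e j ^ 2)
  have ht : 0 ≤ t := Real.sqrt_nonneg _
  have hρ_inv : ρ * (1 / ρ) = 1 := mul_one_div_cancel hρ.ne'
  have hdist' := mul_le_mul_of_nonneg_left hdist (by positivity : 0 ≤ ρ / 2)
  rcases le_total (s - 1 / ρ) 0 with hs | hs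
  · have hρs' : 0 ≤ 1 - ρ * s := by
      nlinarith [mul_le_mul_of_nonneg_left (sub_nonpos.mp hs) hρ.le]
    rw [max_eq_right hs]
    nlinarith [mul_nonneg ht hρs', mul_nonneg hρ.le (sq_nonneg t)]
  · rw [max_eq_left hs]
    nlinarith [sq_nonneg (t - s + 1 / ρ)]

lemma rowCost_shrink {ρ : ℝ} (hρ : 0 < ρ) (y : ι → ℝ) (h : 1 / ρ < √(∑ j, y j ^ 2)) :
    rowCost ρ y (fun j => (√(∑ j', y j' ^ 2) - 1 / ρ) / √(∑ j', y j' ^ 2) * y j) =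
      ρ / 2 * √(∑ j, y j ^ 2) ^ 2 - shrinkGain ρ √(∑ j, y j ^ 2) := by
  set s := √(∑ j, y j ^ 2)
  have hs0 : 0 < s := (one_div_pos.mpr hρ).trans h
  have hs2 : ∑ j, y j ^ 2 = s ^ 2 := (Real.sq_sqrt (by positivity)).symm
  have hnorm : √(∑ j, ((s - 1 / ρ) / s * y j) ^ 2) = s - 1 / ρ := by
    simp_rw [mul_pow, ← Finset.mul_sum, hs2, ← mul_pow, div_mul_cancel₀ _ hs0.ne']
    exact Real.sqrt_sq (by linarith)
  have hdist : ∑ j, ((s - 1 / ρ) / s * y j - y j) ^ 2 = (1 / ρ) ^ 2 := by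
    simp_rw [← sub_one_mul, mul_pow, ← Finset.mul_sum, hs2]
    field_simp
    ring
  rw [rowCost, hnorm, hdist, shrinkGain, max_eq_left (by linarith)]
  field_simp
  ring

lemma sub_ite_shrinkGain_le_rowCost {ρ : ℝ} (hρ : 0 < ρ) (y e : ι → ℝ) :
    ρ / 2 * √(∑ j, y j ^ 2) ^ 2 - (if e ≠ 0 then shrinkGain ρ √(∑ j, y j ^ 2) else 0) ≤
      rowCost ρ y e := by
  by_cases he : e = 0
  · rw [he, if_neg (not_not.mpr rfl), rowCost_zero, sub_zero]
  · rw [if_pos he]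
    exact sub_shrinkGain_le_rowCost hρ y e

lemma rowCost_ite_shrink {ρ : ℝ} (hρ : 0 < ρ) (y : ι → ℝ) (p : Prop) [Decidable p] :
    rowCost ρ y (if 1 / ρ < √(∑ j, y j ^ 2) ∧ p then
        fun j => (√(∑ j', y j' ^ 2) - 1 / ρ) / √(∑ j', y j' ^ 2) * y j else 0) =
      ρ / 2 * √(∑ j, y j ^ 2) ^ 2 - if p then shrinkGain ρ √(∑ j, y j ^ 2) else 0 := by
  by_cases hbig : 1 / ρ < √(∑ j, y j ^ 2)
  · by_cases hp : p
    · rw [if_pos ⟨hbig, hp⟩, if_pos hp, rowCost_shrink hρ y hbig]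
    · rw [if_neg (by tauto), if_neg hp, rowCost_zero, sub_zero]
  · rw [if_neg (by tauto), rowCost_zero, shrinkGain_eq_zero (not_lt.mp hbig), ite_self, sub_zero]

lemma sum_sqrt_add_mul_sum_sq_eq_sum_rowCost {κ : Type*} [Fintype κ] (ρ : ℝ)
    (τ : Equiv.Perm ι) (Y M : Matrix ι κ ℝ) :
    (∑ i, √(∑ j, M i j ^ 2)) + ρ / 2 * (∑ i, ∑ j, (M i j - Y i j) ^ 2) =
      ∑ i, rowCost ρ (Y (τ i)) (M (τ i)) := by
  rw [mul_sum, ← sum_add_distrib]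
  exact (Equiv.sum_comp τ fun i => rowCost ρ (Y i) (M i)).symm

end RowCost

section TopRows

variable {M : Type*} [AddCommMonoid M] [PartialOrder M] [IsOrderedAddMonoid M] {n : ℕ}
  {w : Fin n → M}

lemma sum_le_sum_filter_val_lt_card (hw : Antitone w) (S : Finset (Fin n)) :
    ∑ i ∈ S, w i ≤ ∑ i with i.val < #S, w i := by
  refine Finset.induction_on_max S (by simp) fun a s hlt ih => ?_
  have has : a ∉ s := fun h => lt_irrefl a (hlt a h)
  have hcard : #s ≤ a := by
    simpa using card_le_card (fun x hx => mem_Iio.mpr (hlt x hx) : s ⊆ Iio a)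
  set b : Fin n := ⟨#s, hcard.trans_lt a.isLt⟩
  have hfilter : univ.filter (fun i : Fin n => i.val < #s + 1) =
      insert b (univ.filter fun i : Fin n => i.val < #s) := by
    ext i
    simp only [mem_filter, mem_univ, true_and, mem_insert, Fin.ext_iff, b]
    omega
  rw [sum_insert has, card_insert_of_notMem has, hfilter, sum_insert (by simp [b])]
  exact add_le_add (hw (show b ≤ a from hcard)) ih

lemma sum_le_sum_filter_val_lt (hw : Antitone w) (hw0 : 0 ≤ w) {S : Finset (Fin n)} {γ : ℕ}
    (hS : #S ≤ γ) : ∑ i ∈ S, w i ≤ ∑ i with i.val < γ, w i :=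
  (sum_le_sum_filter_val_lt_card hw S).trans <|
    sum_le_sum_of_subset_of_nonneg (monotone_filter_right _ fun _ _ hi => hi.trans_le hS)
      fun i _ _ => hw0 i

end TopRows

open Classical in
theorem truncated_row_shrinkage_minimizer_general (n r : ℕ) (Y : Matrix (Fin n) (Fin r) ℝ)
    (ρ : ℝ) (hρ : 0 < ρ) (γ : ℕ)
    (τ : Equiv.Perm (Fin n))
    (hτ : ∀ i i' : Fin n, i ≤ i' →
      Real.sqrt (∑ j, (Y (τ i') j) ^ 2) ≤ Real.sqrt (∑ j, (Y (τ i) j) ^ 2))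
    (E : Matrix (Fin n) (Fin r) ℝ)
    (hE : ∀ i : Fin n, E (τ i) =
      if 1 / ρ < Real.sqrt (∑ j, (Y (τ i) j) ^ 2) ∧ (i : ℕ) < γ then
        fun j => ((Real.sqrt (∑ j', (Y (τ i) j') ^ 2) - 1 / ρ) /
          Real.sqrt (∑ j', (Y (τ i) j') ^ 2)) * Y (τ i) j
      else 0) :
    ((univ.filter fun i : Fin n => E i ≠ 0).card ≤ γ) ∧
    ∀ F : Matrix (Fin n) (Fin r) ℝ,
      (univ.filter fun i : Fin n => F i ≠ 0).card ≤ γ →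
      (∑ i, Real.sqrt (∑ j, (E i j) ^ 2)) + ρ / 2 * (∑ i, ∑ j, (E i j - Y i j) ^ 2) ≤
      (∑ i, Real.sqrt (∑ j, (F i j) ^ 2)) + ρ / 2 * (∑ i, ∑ j, (F i j - Y i j) ^ 2) := by
  set s : Fin n → ℝ := fun i => √(∑ j, Y (τ i) j ^ 2)
  have hgain : Antitone fun i => shrinkGain ρ (s i) :=
    (shrinkGain_mono hρ.le).comp_antitone hτ
  have hE_support : ∀ i, E (τ i) ≠ 0 → (i : ℕ) < γ := fun i hi => by
    by_contra h
    exact hi (by rw [hE i, if_neg (by tauto)])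
  have hcard_perm : ∀ F : Matrix (Fin n) (Fin r) ℝ,
      #{i | F (τ i) ≠ 0} = #{i | F i ≠ 0} := fun F => card_equiv τ (by simp)
  refine ⟨?_, fun F hF => ?_⟩
  · calc #{i | E i ≠ 0} = #{i | E (τ i) ≠ 0} := (hcard_perm E).symm
      _ ≤ #{i : Fin n | (i : ℕ) < γ} :=
        card_le_card (monotone_filter_right _ fun i _ => hE_support i)
      _ ≤ γ := Fin.card_filter_val_lt.trans_le (min_le_right _ _)
  rw [sum_sqrt_add_mul_sum_sq_eq_sum_rowCost ρ τ, sum_sqrt_add_mul_sum_sq_eq_sum_rowCost ρ τ]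
  calc ∑ i, rowCost ρ (Y (τ i)) (E (τ i))
      = ∑ i, ρ / 2 * s i ^ 2 - ∑ i with i.val < γ, shrinkGain ρ (s i) := by
        simp only [hE, rowCost_ite_shrink hρ, sum_sub_distrib, sum_filter, s]
    _ ≤ ∑ i, ρ / 2 * s i ^ 2 - ∑ i with F (τ i) ≠ 0, shrinkGain ρ (s i) :=
        sub_le_sub_left (sum_le_sum_filter_val_lt hgain (fun i => shrinkGain_nonneg hρ.le _)
          ((hcard_perm F).trans_le hF)) _
    _ = ∑ i, (ρ / 2 * s i ^ 2 - if F (τ i) ≠ 0 then shrinkGain ρ (s i) else 0) := by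
        rw [sum_sub_distrib, sum_filter]
    _ ≤ ∑ i, rowCost ρ (Y (τ i)) (F (τ i)) :=
        sum_le_sum fun i _ => sub_ite_shrinkGain_le_rowCost hρ _ _

open Classical in
/-- Truncated row-wise shrinkage: with rows of `Y` sorted by decreasing 2-norm via the
permutation `τ`, the matrix `E` that applies row-shrinkage to the `γ` rows of largest
norm and zeros out the remaining rows minimizes `‖E‖_{2,1} + (ρ/2)‖E − Y‖_F²`
over matrices with at most `γ` nonzero rows. -/
theorem truncated_row_shrinkage_minimizer (n r : ℕ) (Y : Matrix (Fin n) (Fin r) ℝ)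
    (ρ : ℝ) (hρ : 0 < ρ) (γ : ℕ) (hγ : γ ≤ n)
    (τ : Equiv.Perm (Fin n))
    (hτ : ∀ i i' : Fin n, i ≤ i' →
      Real.sqrt (∑ j, (Y (τ i') j) ^ 2) ≤ Real.sqrt (∑ j, (Y (τ i) j) ^ 2))
    (E : Matrix (Fin n) (Fin r) ℝ)
    (hE : ∀ i : Fin n, E (τ i) =
      if 1 / ρ < Real.sqrt (∑ j, (Y (τ i) j) ^ 2) ∧ (i : ℕ) < γ then
        fun j => ((Real.sqrt (∑ j', (Y (τ i) j') ^ 2) - 1 / ρ) /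
          Real.sqrt (∑ j', (Y (τ i) j') ^ 2)) * Y (τ i) j
      else 0) :
    ((univ.filter fun i : Fin n => E i ≠ 0).card ≤ γ) ∧
    ∀ F : Matrix (Fin n) (Fin r) ℝ,
      (univ.filter fun i : Fin n => F i ≠ 0).card ≤ γ →
      (∑ i, Real.sqrt (∑ j, (E i j) ^ 2)) + ρ / 2 * (∑ i, ∑ j, (E i j - Y i j) ^ 2) ≤
      (∑ i, Real.sqrt (∑ j, (F i j) ^ 2)) + ρ / 2 * (∑ i, ∑ j, (F i j - Y i j) ^ 2) :=
  truncated_row_shrinkage_minimizer_general n r Y ρ hρ γ τ hτ E hE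
end

section
/- Let r ≥ 1 and δ > 0, and let M be the r×r matrix with entries M_{ij} = 1 if i ≤ j and M_{ij} = 1 + (i−j)δ if i > j (a lower-triangular-shifted Toeplitz matrix whose upper triangle including the diagonal is all ones). Then det(M) = (−δ)^{r−1}; in particular M is nonsingular. -/
/-!
`M` is a Toeplitz matrix `M i j = a (i - j)` whose symbol `a` is constant on `d ≤ 0`.
Subtracting from each column its left neighbour therefore kills the upper triangle and leaves
a lower triangular matrix with diagonal `a 0, a 0 - a 1, …, a 0 - a 1`, i.e. `1, -δ, …, -δ`.
-/

open Matrix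

theorem Matrix.det_toeplitz_of_eq_on_nonpos {R : Type*} [CommRing R] (n : ℕ) (a : ℤ → R)
    (ha : ∀ d ≤ 0, a d = a 0) :
    det (of fun i j : Fin (n + 1) => a ((i : ℤ) - j)) = a 0 * (a 0 - a 1) ^ n := by
  set B : Matrix (Fin (n + 1)) (Fin (n + 1)) R :=
    of fun i j => if j = 0 then a i else a ((i : ℤ) - j) - a ((i : ℤ) - j + 1)
  have hdet : det (of fun i j : Fin (n + 1) => a ((i : ℤ) - j)) = det B := by
    refine det_eq_of_forall_col_eq_smul_add_pred (fun _ => 1) (fun i => by simp [B]) ?_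
    intro i j
    simp only [B, of_apply, Fin.succ_ne_zero, if_false, Fin.val_succ, Fin.val_castSucc, one_mul]
    push_cast
    ring_nf
  have hlower : B.IsLowerTriangular := by
    intro i j hij
    have hij : (i : ℤ) < j := by exact_mod_cast hij
    have hj : j ≠ 0 := by rintro rfl; simp at hij; omega
    simp only [B, of_apply, hj, if_false]
    rw [ha (i - j) (by omega), ha (i - j + 1) (by omega), sub_self]
  rw [hdet, det_of_isLowerTriangular B hlower, Fin.prod_univ_succ]
  simp [B, Fin.succ_ne_zero]

theorem toeplitz_det_general (r : ℕ) (δ : ℝ) (hδ : 0 < δ)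
    (M : Matrix (Fin r) (Fin r) ℝ)
    (hM : ∀ i j : Fin r, M i j =
      if (i : ℕ) ≤ (j : ℕ) then 1 else 1 + (((i : ℕ) - (j : ℕ) : ℕ) : ℝ) * δ) :
    M.det = (-δ) ^ (r - 1) ∧ M.det ≠ 0 := by
  have hdet : M.det = (-δ) ^ (r - 1) := by
    cases r with
    | zero => simp
    | succ n =>
      set a : ℤ → ℝ := fun d => if d ≤ 0 then 1 else 1 + d * δ
      have hM_toeplitz : M = of fun i j : Fin (n + 1) => a ((i : ℤ) - j) := by
        ext i j
        rw [hM]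
        by_cases hij : (i : ℕ) ≤ j
        · simp only [a, of_apply, hij, show (i : ℤ) - j ≤ 0 by omega, if_true]
        · simp only [a, of_apply, hij, show ¬(i : ℤ) - j ≤ 0 by omega, if_false]
          push_cast [Nat.cast_sub (le_of_not_ge hij)]
          rfl
      rw [hM_toeplitz, det_toeplitz_of_eq_on_nonpos n a fun d hd => by simp [a, hd]]
      simp [a]
  exact ⟨hdet, hdet ▸ pow_ne_zero _ (neg_ne_zero.mpr hδ.ne')⟩

/-- Determinant of the Toeplitz-like matrix with ones on and above the diagonal and
entries `1 + (i−j)δ` below the diagonal: `det M = (−δ)^(r−1)`; in particular `M`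
is nonsingular. -/
theorem toeplitz_det (r : ℕ) (hr : 1 ≤ r) (δ : ℝ) (hδ : 0 < δ)
    (M : Matrix (Fin r) (Fin r) ℝ)
    (hM : ∀ i j : Fin r, M i j =
      if (i : ℕ) ≤ (j : ℕ) then 1 else 1 + (((i : ℕ) - (j : ℕ) : ℕ) : ℝ) * δ) :
    M.det = (-δ) ^ (r - 1) ∧ M.det ≠ 0 :=
  toeplitz_det_general r δ hδ M hM
end
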